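/- Let X be a B × d₂ random matrix with i.i.d. entries uniform on {-γ, γ}. Then P(|∑_{i=1}^{B} ∑_{j,k=1}^{d₂} X_{ij}X_{ik} - γ²Bd₂| ≥ γ²Bd₂²/8) ≤ 2exp(-cBd₂) for a universal constant c > 0, provided d₂ ≥ 2. -/

import Mathlib

/-!
With `S i = ∑ j, X i j`, the sum is `∑ i, S i ^ 2`; the rows are independent and
`E[S i ^ 2] = γ² d₂`, so the event is a deviation by `γ² B d₂² / 8` from the mean.

For `d₂ < 256`, Hoeffding's inequality for the bounded variables `S i ^ 2 ∈ [0, γ² d₂²]` gives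
`2 exp (-B / 32) ≤ 2 exp (-B d₂ / 8192)`.

For `d₂ ≥ 256` only an upward deviation is possible. As `|S i| ≤ γ d₂`, at
`t = 1 / (8 γ² d₂)` we have `t S i ^ 2 ≤ |S i| / (8 γ)`, so
`E[exp (t S i ^ 2)] ≤ 2 cosh (1 / 8) ^ d₂ ≤ 2 exp (d₂ / 128)`, and the Chernoff bound gives
`exp (-B d₂ / 64) (2 exp (d₂ / 128)) ^ B ≤ exp (-B d₂ / 256)`.
-/

open MeasureTheory ProbabilityTheory Real Finset

namespace ProbabilityTheory

variable {Ω : Type*} {mΩ : MeasurableSpace Ω} {μ : Measure Ω}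

lemma iIndepFun.curry {ι κ 𝓧 : Type*} {m𝓧 : MeasurableSpace 𝓧} {X : ι → κ → Ω → 𝓧}
    (mX : ∀ i j, Measurable (X i j)) (h : iIndepFun (fun (p : ι × κ) ω ↦ X p.1 p.2 ω) μ) :
    iIndepFun (fun i ω ↦ (X i · ω)) μ := by
  have := h.isProbabilityMeasure
  have : ∀ i j, IsProbabilityMeasure (μ.map (X i j)) :=
    fun i j ↦ Measure.isProbabilityMeasure_map (mX i j).aemeasurable
  have hrow (i : ι) : μ.map (fun ω ↦ (X i · ω)) = Measure.infinitePi fun j ↦ μ.map (X i j) :=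
    (iIndepFun_iff_map_fun_eq_infinitePi_map (by fun_prop)).1
      (h.precomp (g := Prod.mk i) (Prod.mk_right_injective i))
  have hcurry : (fun ω i j ↦ X i j ω) =
      MeasurableEquiv.curry ι κ 𝓧 ∘ fun ω (p : ι × κ) ↦ X p.1 p.2 ω := rfl
  rw [iIndepFun_iff_map_fun_eq_infinitePi_map (by fun_prop), hcurry,
    ← Measure.map_map (by fun_prop) (by fun_prop),
    (iIndepFun_iff_map_fun_eq_infinitePi_map (by fun_prop)).1 h,
    Measure.infinitePi_map_curry (fun i j ↦ μ.map (X i j))]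
  simp_rw [hrow]

lemma measureReal_abs_sum_sub_integral_ge_le_of_mem_Icc [IsProbabilityMeasure μ] {ι : Type*}
    [Fintype ι] {V : ι → Ω → ℝ} (hV : ∀ i, Measurable (V i)) (hind : iIndepFun V μ) {a b : ℝ}
    (hab : ∀ i, ∀ᵐ ω ∂μ, V i ω ∈ Set.Icc a b) {ε : ℝ} (hε : 0 ≤ ε) :
    μ.real {ω | ε ≤ |∑ i, (V i ω - μ[V i])|} ≤
      2 * exp (-2 * ε ^ 2 / (Fintype.card ι * (b - a) ^ 2)) := by
  set W : ι → Ω → ℝ := fun i ω ↦ V i ω - μ[V i]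
  set c : NNReal := (‖b - a‖₊ / 2) ^ 2
  have hW (i : ι) : HasSubgaussianMGF (W i) c μ :=
    hasSubgaussianMGF_of_mem_Icc (hV i).aemeasurable (hab i)
  have hindW : iIndepFun W μ :=
    hind.comp (fun i (x : ℝ) ↦ x - ∫ ω, V i ω ∂μ) fun _ ↦ measurable_id.sub_const _
  have hindW' : iIndepFun (fun i ↦ -W i) μ := hindW.comp (fun _ (x : ℝ) ↦ -x) fun _ ↦ measurable_neg
  have hvar : 2 * ((∑ _i : ι, c : NNReal) : ℝ) = Fintype.card ι * (b - a) ^ 2 / 2 := by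
    simp only [c, sum_const, card_univ, nsmul_eq_mul, NNReal.coe_mul, NNReal.coe_natCast,
      NNReal.coe_pow, NNReal.coe_div, coe_nnnorm, norm_eq_abs, NNReal.coe_ofNat, div_pow, sq_abs]
    ring
  calc μ.real {ω | ε ≤ |∑ i, W i ω|}
      ≤ μ.real ({ω | ε ≤ ∑ i, W i ω} ∪ {ω | ε ≤ ∑ i, (-W i) ω}) := by
        refine measureReal_mono (fun ω hω ↦ ?_)
        simpa [le_abs] using hω
    _ ≤ μ.real {ω | ε ≤ ∑ i, W i ω} + μ.real {ω | ε ≤ ∑ i, (-W i) ω} := measureReal_union_le _ _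
    _ ≤ exp (-ε ^ 2 / (2 * ((∑ _i : ι, c : NNReal) : ℝ))) +
          exp (-ε ^ 2 / (2 * ((∑ _i : ι, c : NNReal) : ℝ))) := by
        gcongr
        · exact HasSubgaussianMGF.measure_sum_ge_le_of_iIndepFun hindW (fun i _ ↦ hW i) hε
        · exact HasSubgaussianMGF.measure_sum_ge_le_of_iIndepFun hindW' (fun i _ ↦ (hW i).neg) hε
    _ = 2 * exp (-2 * ε ^ 2 / (Fintype.card ι * (b - a) ^ 2)) := by
        rw [hvar, ← two_mul, div_div_eq_mul_div]
        ring_nf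

def IsRademacher (Y : Ω → ℝ) (γ : ℝ) (μ : Measure Ω) : Prop :=
  μ {ω | Y ω = γ} = 1 / 2 ∧ μ {ω | Y ω = -γ} = 1 / 2

namespace IsRademacher

variable [IsProbabilityMeasure μ] {Y : Ω → ℝ} {γ : ℝ}

lemma ae_eq_or_eq_neg (hY : Measurable Y) (hγ : γ ≠ 0) (h : IsRademacher Y γ μ) :
    ∀ᵐ ω ∂μ, Y ω = γ ∨ Y ω = -γ := by
  have hpos : MeasurableSet {ω | Y ω = γ} := hY (measurableSet_singleton _)
  have hneg : MeasurableSet {ω | Y ω = -γ} := hY (measurableSet_singleton _)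
  have hdisj : Disjoint {ω | Y ω = γ} {ω | Y ω = -γ} :=
    Set.disjoint_left.2 fun ω (h₁ : Y ω = γ) (h₂ : Y ω = -γ) ↦ hγ (by linarith)
  have hunion : μ ({ω | Y ω = γ} ∪ {ω | Y ω = -γ}) = μ Set.univ := by
    rw [measure_union hdisj hneg, h.1, h.2, ENNReal.add_halves, measure_univ]
  exact (ae_iff_measure_eq (hpos.union hneg).nullMeasurableSet).2 hunion

lemma integral_comp (hY : Measurable Y) (hγ : γ ≠ 0) (h : IsRademacher Y γ μ) (g : ℝ → ℝ) :
    ∫ ω, g (Y ω) ∂μ = (g γ + g (-γ)) / 2 := by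
  have hpos : MeasurableSet {ω | Y ω = γ} := hY (measurableSet_singleton _)
  have hneg : MeasurableSet {ω | Y ω = -γ} := hY (measurableSet_singleton _)
  have hsplit : (fun ω ↦ g (Y ω)) =ᵐ[μ]
      {ω | Y ω = γ}.indicator (fun _ ↦ g γ) + {ω | Y ω = -γ}.indicator (fun _ ↦ g (-γ)) := by
    filter_upwards [h.ae_eq_or_eq_neg hY hγ] with ω hω
    have hne : γ ≠ -γ := fun h ↦ hγ (by linarith)
    rcases hω with hω | hω <;> simp [hω, hne, hne.symm]
  rw [integral_congr_ae hsplit, Pi.add_def, integral_add ((integrable_const _).indicator hpos)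
    ((integrable_const _).indicator hneg), integral_indicator_const _ hpos,
    integral_indicator_const _ hneg, measureReal_def, measureReal_def, h.1, h.2]
  simp only [one_div, ENNReal.toReal_inv, ENNReal.toReal_ofNat, smul_eq_mul]
  ring

lemma mgf_eq (hY : Measurable Y) (hγ : γ ≠ 0) (h : IsRademacher Y γ μ) (t : ℝ) :
    mgf Y μ t = cosh (t * γ) := by
  rw [mgf, h.integral_comp hY hγ (fun y ↦ exp (t * y)), cosh_eq, mul_neg]

lemma integral_eq_zero (hY : Measurable Y) (hγ : γ ≠ 0) (h : IsRademacher Y γ μ) :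
    μ[Y] = 0 := by
  simpa using h.integral_comp hY hγ id

lemma variance_eq (hY : Measurable Y) (hγ : γ ≠ 0) (h : IsRademacher Y γ μ) :
    Var[Y; μ] = γ ^ 2 := by
  rw [variance_of_integral_eq_zero hY.aemeasurable (h.integral_eq_zero hY hγ),
    h.integral_comp hY hγ (· ^ 2)]
  ring

lemma abs_le (hY : Measurable Y) (hγ : γ ≠ 0) (h : IsRademacher Y γ μ) :
    ∀ᵐ ω ∂μ, |Y ω| ≤ |γ| := by
  filter_upwards [h.ae_eq_or_eq_neg hY hγ] with ω hω
  rcases hω with hω | hω <;> simp [hω]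

end IsRademacher

section RademacherSum

variable [IsProbabilityMeasure μ] {κ : Type*} [Fintype κ] {Y : κ → Ω → ℝ} {γ : ℝ}

lemma abs_sum_le_of_isRademacher (hY : ∀ j, Measurable (Y j)) (hγ : γ ≠ 0)
    (hR : ∀ j, IsRademacher (Y j) γ μ) :
    ∀ᵐ ω ∂μ, |∑ j, Y j ω| ≤ Fintype.card κ * |γ| := by
  filter_upwards [ae_all_iff.2 fun j ↦ (hR j).abs_le (hY j) hγ] with ω hω
  calc |∑ j, Y j ω| ≤ ∑ j, |Y j ω| := abs_sum_le_sum_abs _ _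
    _ ≤ ∑ _j : κ, |γ| := sum_le_sum fun j _ ↦ hω j
    _ = Fintype.card κ * |γ| := by simp

lemma mgf_sum_of_isRademacher (hY : ∀ j, Measurable (Y j)) (hind : iIndepFun Y μ) (hγ : γ ≠ 0)
    (hR : ∀ j, IsRademacher (Y j) γ μ) (t : ℝ) :
    mgf (fun ω ↦ ∑ j, Y j ω) μ t = cosh (t * γ) ^ Fintype.card κ := by
  have := hind.mgf_sum hY univ (t := t)
  simp only [(hR _).mgf_eq (hY _) hγ, prod_const, card_univ] at this
  rw [← this]
  congr with ω
  simp

lemma integral_sq_sum_of_isRademacher (hY : ∀ j, Measurable (Y j)) (hind : iIndepFun Y μ)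
    (hγ : γ ≠ 0) (hR : ∀ j, IsRademacher (Y j) γ μ) :
    ∫ ω, (∑ j, Y j ω) ^ 2 ∂μ = Fintype.card κ * γ ^ 2 := by
  have hL2 (j : κ) : MemLp (Y j) 2 μ :=
    .of_bound (hY j).aestronglyMeasurable |γ| ((hR j).abs_le (hY j) hγ)
  have hmean : μ[fun ω ↦ ∑ j, Y j ω] = 0 := by
    rw [integral_finsetSum _ fun j _ ↦ (hL2 j).integrable one_le_two]
    simp [(hR _).integral_eq_zero (hY _) hγ]
  rw [← variance_of_integral_eq_zero (by fun_prop) hmean, ← Finset.sum_fn,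
    IndepFun.variance_sum (fun j _ ↦ hL2 j) fun j _ k _ hjk ↦ hind.indepFun hjk]
  simp [(hR _).variance_eq (hY _) hγ]

lemma mgf_sq_sum_le_of_isRademacher (hY : ∀ j, Measurable (Y j)) (hind : iIndepFun Y μ)
    (hγ : γ ≠ 0) (hR : ∀ j, IsRademacher (Y j) γ μ) {t : ℝ} (ht : 0 ≤ t) :
    mgf (fun ω ↦ (∑ j, Y j ω) ^ 2) μ t ≤
      2 * exp (t ^ 2 * γ ^ 4 * Fintype.card κ ^ 3 / 2) := by
  set n : ℝ := (Fintype.card κ : ℝ)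
  set a := t * n * |γ|
  have hbound := abs_sum_le_of_isRademacher hY hγ hR
  have hIcc : ∀ᵐ ω ∂μ, ∑ j, Y j ω ∈ Set.Icc (-(n * |γ|)) (n * |γ|) := by
    filter_upwards [hbound] with ω hω using abs_le.1 hω
  have hS : AEMeasurable (fun ω ↦ ∑ j, Y j ω) μ := by fun_prop
  -- on `|S| ≤ n |γ|` we have `t S² ≤ a |S|`, and `exp |x| ≤ exp x + exp (-x)`
  have hpointwise : ∀ᵐ ω ∂μ, exp (t * (∑ j, Y j ω) ^ 2) ≤
      exp (a * ∑ j, Y j ω) + exp (-a * ∑ j, Y j ω) := by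
    filter_upwards [hbound] with ω hω
    calc exp (t * (∑ j, Y j ω) ^ 2) ≤ exp |a * ∑ j, Y j ω| := by
          rw [exp_le_exp, abs_mul, abs_of_nonneg (by positivity : 0 ≤ a), ← sq_abs]
          have := abs_nonneg (∑ j, Y j ω)
          calc t * |∑ j, Y j ω| ^ 2 ≤ t * ((n * |γ|) * |∑ j, Y j ω|) := by gcongr; nlinarith
            _ = a * |∑ j, Y j ω| := by ring
      _ ≤ _ := by simpa [neg_mul] using exp_abs_le (a * ∑ j, Y j ω)
  calc mgf (fun ω ↦ (∑ j, Y j ω) ^ 2) μ t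
      ≤ ∫ ω, (exp (a * ∑ j, Y j ω) + exp (-a * ∑ j, Y j ω)) ∂μ :=
        integral_mono_ae (integrable_exp_mul_of_le t _ ht (by fun_prop)
            (hbound.mono fun ω hω ↦ (sq_le_sq' (abs_le.1 hω).1 (abs_le.1 hω).2)))
          ((integrable_exp_mul_of_mem_Icc hS hIcc).add (integrable_exp_mul_of_mem_Icc hS hIcc))
          hpointwise
    _ = mgf (fun ω ↦ ∑ j, Y j ω) μ a + mgf (fun ω ↦ ∑ j, Y j ω) μ (-a) :=
        integral_add (integrable_exp_mul_of_mem_Icc hS hIcc) (integrable_exp_mul_of_mem_Icc hS hIcc)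
    _ = 2 * cosh (a * γ) ^ Fintype.card κ := by
        rw [mgf_sum_of_isRademacher hY hind hγ hR, mgf_sum_of_isRademacher hY hind hγ hR,
          neg_mul, cosh_neg, two_mul]
    _ ≤ 2 * exp ((a * γ) ^ 2 / 2) ^ Fintype.card κ := by
        gcongr
        exact cosh_le_exp_half_sq _
    _ = 2 * exp (t ^ 2 * γ ^ 4 * n ^ 3 / 2) := by
        rw [← exp_nat_mul]
        congr 2
        simp only [a, mul_pow, sq_abs]
        ring

end RademacherSum

lemma iIndepFun_sq_sum_rows {ι κ : Type*} [Fintype κ] {X : ι → κ → Ω → ℝ}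
    (hX : ∀ i j, Measurable (X i j))
    (hind : iIndepFun (fun (p : ι × κ) ω ↦ X p.1 p.2 ω) μ) :
    iIndepFun (fun i ω ↦ (∑ j, X i j ω) ^ 2) μ :=
  (hind.curry hX).comp (fun _ v ↦ (∑ j, v j) ^ 2) fun _ ↦ by fun_prop

section RowSums

variable [IsProbabilityMeasure μ] {ι κ : Type*} [Fintype ι] [Fintype κ] {X : ι → κ → Ω → ℝ}
  {γ : ℝ}

lemma measureReal_abs_sum_sq_rows_sub_ge_le (hX : ∀ i j, Measurable (X i j))
    (hind : iIndepFun (fun (p : ι × κ) ω ↦ X p.1 p.2 ω) μ) (hγ : γ ≠ 0)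
    (hR : ∀ i j, IsRademacher (X i j) γ μ) {ε : ℝ} (hε : 0 ≤ ε) :
    μ.real {ω | ε ≤ |∑ i, (∑ j, X i j ω) ^ 2 - γ ^ 2 * Fintype.card ι * Fintype.card κ|} ≤
      2 * exp (-2 * ε ^ 2 / (Fintype.card ι * (Fintype.card κ ^ 2 * γ ^ 2) ^ 2)) := by
  have hrow (i : ι) : iIndepFun (X i) μ := hind.precomp (g := Prod.mk i) (Prod.mk_right_injective i)
  have hmem (i : ι) : ∀ᵐ ω ∂μ, (∑ j, X i j ω) ^ 2 ∈ Set.Icc 0 (Fintype.card κ ^ 2 * γ ^ 2) := by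
    filter_upwards [abs_sum_le_of_isRademacher (hX i) hγ (hR i)] with ω hω
    refine ⟨sq_nonneg _, ?_⟩
    rw [← sq_abs, ← sq_abs γ, ← mul_pow]
    exact pow_le_pow_left₀ (abs_nonneg _) hω 2
  have hsum (ω : Ω) : ∑ i, ((∑ j, X i j ω) ^ 2 - ∫ ω', (∑ j, X i j ω') ^ 2 ∂μ) =
      ∑ i, (∑ j, X i j ω) ^ 2 - γ ^ 2 * Fintype.card ι * Fintype.card κ := by
    simp only [integral_sq_sum_of_isRademacher (hX _) (hrow _) hγ (hR _), sum_sub_distrib,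
      sum_const, card_univ, nsmul_eq_mul, sub_right_inj]
    ring
  simpa [hsum] using measureReal_abs_sum_sub_integral_ge_le_of_mem_Icc
    (fun i ↦ by fun_prop) (iIndepFun_sq_sum_rows hX hind) hmem hε

lemma measureReal_sum_sq_rows_ge_le (hX : ∀ i j, Measurable (X i j))
    (hind : iIndepFun (fun (p : ι × κ) ω ↦ X p.1 p.2 ω) μ) (hγ : γ ≠ 0)
    (hR : ∀ i j, IsRademacher (X i j) γ μ) {t : ℝ} (ht : 0 ≤ t) (ε : ℝ) :
    μ.real {ω | ε ≤ ∑ i, (∑ j, X i j ω) ^ 2} ≤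
      exp (-t * ε) * (2 * exp (t ^ 2 * γ ^ 4 * Fintype.card κ ^ 3 / 2)) ^ Fintype.card ι := by
  have hrow (i : ι) : iIndepFun (X i) μ := hind.precomp (g := Prod.mk i) (Prod.mk_right_injective i)
  have hbound : ∀ᵐ ω ∂μ, ∑ i, (∑ j, X i j ω) ^ 2 ≤ ∑ _i : ι, (Fintype.card κ * |γ|) ^ 2 := by
    filter_upwards [ae_all_iff.2 fun i ↦ abs_sum_le_of_isRademacher (hX i) hγ (hR i)] with ω hω
    exact sum_le_sum fun i _ ↦ sq_le_sq' (abs_le.1 (hω i)).1 (abs_le.1 (hω i)).2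
  have hmgf : mgf (fun ω ↦ ∑ i, (∑ j, X i j ω) ^ 2) μ t =
      ∏ i, mgf (fun ω ↦ (∑ j, X i j ω) ^ 2) μ t := by
    rw [← (iIndepFun_sq_sum_rows hX hind).mgf_sum (fun _ ↦ by fun_prop)]
    congr with ω
    simp
  calc μ.real {ω | ε ≤ ∑ i, (∑ j, X i j ω) ^ 2}
      ≤ exp (-t * ε) * mgf (fun ω ↦ ∑ i, (∑ j, X i j ω) ^ 2) μ t :=
        measure_ge_le_exp_mul_mgf ε ht (integrable_exp_mul_of_le t _ ht (by fun_prop) hbound)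
    _ ≤ exp (-t * ε) * (2 * exp (t ^ 2 * γ ^ 4 * Fintype.card κ ^ 3 / 2)) ^ Fintype.card ι := by
        rw [hmgf]
        gcongr
        simpa using prod_le_prod (s := univ) (fun i _ ↦ mgf_nonneg)
          fun i _ ↦ mgf_sq_sum_le_of_isRademacher (hX i) (hrow i) hγ (hR i) ht

lemma measureReal_sum_sq_rows_deviation_le_two_mul_exp [Nonempty ι] [Nonempty κ]
    (hX : ∀ i j, Measurable (X i j)) (hind : iIndepFun (fun (p : ι × κ) ω ↦ X p.1 p.2 ω) μ)
    (hγ : γ ≠ 0) (hR : ∀ i j, IsRademacher (X i j) γ μ) :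
    μ.real {ω | γ ^ 2 * Fintype.card ι * Fintype.card κ ^ 2 / 8 ≤
        |∑ i, (∑ j, X i j ω) ^ 2 - γ ^ 2 * Fintype.card ι * Fintype.card κ|} ≤
      2 * exp (-(Fintype.card ι / 32)) := by
  have hn : (Fintype.card ι : ℝ) ≠ 0 := by positivity
  have hd : (Fintype.card κ : ℝ) ≠ 0 := by positivity
  refine (measureReal_abs_sum_sq_rows_sub_ge_le hX hind hγ hR (by positivity)).trans_eq ?_
  congr 2
  field_simp
  ring

lemma measureReal_sum_sq_rows_deviation_le_exp [Nonempty ι] (hX : ∀ i j, Measurable (X i j))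
    (hind : iIndepFun (fun (p : ι × κ) ω ↦ X p.1 p.2 ω) μ) (hγ : γ ≠ 0)
    (hR : ∀ i j, IsRademacher (X i j) γ μ) (hd : 256 ≤ Fintype.card κ) :
    μ.real {ω | γ ^ 2 * Fintype.card ι * Fintype.card κ ^ 2 / 8 ≤
        |∑ i, (∑ j, X i j ω) ^ 2 - γ ^ 2 * Fintype.card ι * Fintype.card κ|} ≤
      exp (-(Fintype.card ι * Fintype.card κ / 256)) := by
  set n : ℝ := (Fintype.card ι : ℝ)
  set d : ℝ := (Fintype.card κ : ℝ)
  have hn : 0 < n := by positivity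
  have hd' : (256 : ℝ) ≤ d := by simp only [d]; exact_mod_cast hd
  have hexp₁ : -(1 / (8 * γ ^ 2 * d)) * (γ ^ 2 * n * d ^ 2 / 8) = -(n * d / 64) := by
    field_simp
    ring
  have hexp₂ : (1 / (8 * γ ^ 2 * d)) ^ 2 * γ ^ 4 * d ^ 3 / 2 = d / 128 := by
    field_simp
    ring
  calc _ ≤ μ.real {ω | γ ^ 2 * n * d ^ 2 / 8 ≤ ∑ i, (∑ j, X i j ω) ^ 2} := by
        -- the lower deviation is impossible, the centre `γ² n d` being below `γ² n d² / 8`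
        refine measureReal_mono fun ω hω ↦ ?_
        simp only [Set.mem_ofPred_eq] at hω ⊢
        have hnonneg : 0 ≤ ∑ i, (∑ j, X i j ω) ^ 2 := sum_nonneg fun _ _ ↦ sq_nonneg _
        have hcentre : 0 < γ ^ 2 * n * d * (d - 8) := mul_pos (by positivity) (by linarith)
        have : 0 ≤ γ ^ 2 * n * d := by positivity
        rcases le_abs.1 hω with h | h <;> nlinarith
    _ ≤ exp (-(1 / (8 * γ ^ 2 * d)) * (γ ^ 2 * n * d ^ 2 / 8)) *
          (2 * exp ((1 / (8 * γ ^ 2 * d)) ^ 2 * γ ^ 4 * d ^ 3 / 2)) ^ Fintype.card ι :=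
        measureReal_sum_sq_rows_ge_le hX hind hγ hR (by positivity) _
    _ ≤ exp (-(n * d / 64)) * (exp (d / 256) * exp (d / 128)) ^ Fintype.card ι := by
        rw [hexp₁, hexp₂]
        gcongr
        linarith [add_one_le_exp (d / 256)]
    _ = exp (-(n * d / 256)) := by
        rw [← exp_add, ← exp_nat_mul, ← exp_add]
        congr 1
        ring

end RowSums

end ProbabilityTheory

/-- For a `B × d₂` matrix `X` with i.i.d. entries uniform on `{-γ, γ}` and `d₂ ≥ 2`,
`P(|∑_{i,j,k} X_{ij} X_{ik} - γ² B d₂| ≥ γ² B d₂² / 8) ≤ 2 exp(-c B d₂)`. -/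
theorem cross_term_XX_bound :
    ∃ c : ℝ, 0 < c ∧
      ∀ (Ω : Type) (_ : MeasurableSpace Ω) (μ : Measure Ω), IsProbabilityMeasure μ →
        ∀ (B d₂ : ℕ), 0 < B → 2 ≤ d₂ →
          ∀ (γ : ℝ), 0 < γ →
            ∀ (X : Fin B → Fin d₂ → Ω → ℝ),
              (∀ i j, Measurable (X i j)) →
              iIndepFun
                (fun (p : Fin B × Fin d₂) ω => X p.1 p.2 ω) μ →
              (∀ i j, μ {ω | X i j ω = γ} = 1/2 ∧ μ {ω | X i j ω = -γ} = 1/2) →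
              μ {ω | γ ^ 2 * B * (d₂ : ℝ) ^ 2 / 8 ≤
                  |(∑ i : Fin B, ∑ j : Fin d₂, ∑ k : Fin d₂, X i j ω * X i k ω)
                    - γ ^ 2 * B * d₂|} ≤
                ENNReal.ofReal (2 * Real.exp (-(c * B * d₂))) := by
  refine ⟨1 / 8192, by norm_num, fun Ω _ μ _ B d₂ hB hd₂ γ hγ X hX hind hR ↦ ?_⟩
  have : Nonempty (Fin B) := Fin.pos_iff_nonempty.1 hB
  have : Nonempty (Fin d₂) := Fin.pos_iff_nonempty.1 (by omega)
  simp only [← sq, ← sum_mul_sum]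
  rw [← ofReal_measureReal]
  refine ENNReal.ofReal_le_ofReal ?_
  rcases lt_or_ge d₂ 256 with hd | hd
  · have hd' : (d₂ : ℝ) ≤ 256 := by exact_mod_cast hd.le
    calc _ ≤ 2 * exp (-(B / 32)) := by
          simpa using measureReal_sum_sq_rows_deviation_le_two_mul_exp hX hind hγ.ne' hR
      _ ≤ 2 * exp (-(1 / 8192 * B * d₂)) := by gcongr; nlinarith
  · calc _ ≤ exp (-(B * d₂ / 256)) := by
          simpa using measureReal_sum_sq_rows_deviation_le_exp hX hind hγ.ne' hR (by simpa)
      _ ≤ 2 * exp (-(1 / 8192 * B * d₂)) := by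
          have : exp (-(B * d₂ / 256)) ≤ exp (-(1 / 8192 * B * d₂)) := by gcongr; nlinarith
          linarith [exp_pos (-(1 / 8192 * B * d₂))]
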